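/- For an agent i in group G_j located at x_i in [0,1], with cost c_i(y) = |y - x_i| + α · Σ_{k ∈ G_j \ {i}} (1 - |y - x_k|) where α ≥ 0 and the other |G_j|-1 group members are at locations x_k ∈ [0,1], the cost c_i(y) is non-decreasing in y on the region where y ≥ x_i and y ≥ x_k for all k (and symmetrically non-increasing toward the left when all x_k ≤ x_i ≤ y decreasing), for all possible placements of the group members, if and only if α ≤ 1/(|G_j| - 1). -/

import Mathlib

/-!
Once the facility lies beyond the agent and all its group mates, every absolute value in
`c_i(y)` is affine in `y`, so `c_i` has constant slope `1 - α (|G_j| - 1)` there, on either side.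
Consistency of aversion therefore says exactly that this slope is nonnegative.
-/

open Finset

/-- `c_i(y)` of the paper; `ι` indexes the other members of agent `i`'s group. -/
noncomputable def groupCost {ι : Type*} [Fintype ι] (α xi : ℝ) (x : ι → ℝ) (y : ℝ) : ℝ :=
  |y - xi| + α * ∑ k, (1 - |y - x k|)

section
variable {ι : Type*} (t : Finset ι) (x : ι → ℝ) {y : ℝ}

theorem sum_one_sub_abs_of_forall_le (h : ∀ k ∈ t, x k ≤ y) :
    ∑ k ∈ t, (1 - |y - x k|) = #t * (1 - y) + ∑ k ∈ t, x k := by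
  rw [← nsmul_eq_mul, ← sum_const, ← sum_add_distrib]
  refine sum_congr rfl fun k hk => ?_
  rw [abs_of_nonneg (sub_nonneg.2 (h k hk))]
  ring

theorem sum_one_sub_abs_of_forall_ge (h : ∀ k ∈ t, y ≤ x k) :
    ∑ k ∈ t, (1 - |y - x k|) = #t * (1 + y) - ∑ k ∈ t, x k := by
  rw [← nsmul_eq_mul, ← sum_const, ← sum_sub_distrib]
  refine sum_congr rfl fun k hk => ?_
  rw [abs_of_nonpos (sub_nonpos.2 (h k hk))]
  ring

end

section
variable {ι : Type*} [Fintype ι] (α : ℝ) {xi : ℝ} {x : ι → ℝ} {y y' : ℝ}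

theorem groupCost_sub_of_right (hy : xi ≤ y) (hx : ∀ k, x k ≤ y) (hyy' : y ≤ y') :
    groupCost α xi x y' - groupCost α xi x y = (1 - α * Fintype.card ι) * (y' - y) := by
  have hx' : ∀ k, x k ≤ y' := fun k => (hx k).trans hyy'
  simp only [groupCost, ← card_univ]
  rw [sum_one_sub_abs_of_forall_le _ _ fun k _ => hx k,
    sum_one_sub_abs_of_forall_le _ _ fun k _ => hx' k,
    abs_of_nonneg (sub_nonneg.2 hy), abs_of_nonneg (sub_nonneg.2 (hy.trans hyy'))]
  ring

theorem groupCost_sub_of_left (hyy' : y ≤ y') (hy' : y' ≤ xi) (hx : ∀ k, y' ≤ x k) :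
    groupCost α xi x y - groupCost α xi x y' = (1 - α * Fintype.card ι) * (y' - y) := by
  have hx' : ∀ k, y ≤ x k := fun k => hyy'.trans (hx k)
  simp only [groupCost, ← card_univ]
  rw [sum_one_sub_abs_of_forall_ge _ _ fun k _ => hx k,
    sum_one_sub_abs_of_forall_ge _ _ fun k _ => hx' k,
    abs_of_nonpos (sub_nonpos.2 hy'), abs_of_nonpos (sub_nonpos.2 (hyy'.trans hy'))]
  ring

end

theorem consistency_of_aversion_iff (s : ℕ) (hs : 1 ≤ s) (α : ℝ)
    (xi : ℝ)
    (cost : (Fin s → ℝ) → ℝ → ℝ)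
    (hcost : ∀ x y, cost x y = |y - xi| + α * ∑ k, (1 - |y - x k|)) :
    (∀ x : Fin s → ℝ, (∀ k, x k ∈ Set.Icc (0:ℝ) 1) →
      ((∀ y y' : ℝ, xi ≤ y → (∀ k, x k ≤ y) → y ≤ y' → cost x y ≤ cost x y') ∧
       (∀ y y' : ℝ, y ≤ y' → y' ≤ xi → (∀ k, y' ≤ x k) → cost x y' ≤ cost x y)))
    ↔ α ≤ 1 / (s : ℝ) := by
  obtain rfl : cost = groupCost α xi := funext₂ hcost
  have hslope : α ≤ 1 / (s : ℝ) ↔ 0 ≤ 1 - α * Fintype.card (Fin s) := by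
    rw [le_div_iff₀ (by exact_mod_cast hs), Fintype.card_fin, sub_nonneg]
  rw [hslope]
  constructor
  · intro h
    have hx : ∀ k : Fin s, (0 : Fin s → ℝ) k ≤ |xi| := fun _ => abs_nonneg xi
    have hmono := (h 0 fun _ => by simp).1 |xi| (|xi| + 1) (le_abs_self xi) hx (by linarith)
    rwa [← sub_nonneg, groupCost_sub_of_right α (le_abs_self xi) hx (by linarith),
      add_sub_cancel_left, mul_one] at hmono
  · intro h x _
    refine ⟨fun y y' hy hx hyy' => ?_, fun y y' hyy' hy' hx => ?_⟩
    · rw [← sub_nonneg, groupCost_sub_of_right α hy hx hyy']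
      exact mul_nonneg h (sub_nonneg.2 hyy')
    · rw [← sub_nonneg, groupCost_sub_of_left α hyy' hy' hx]
      exact mul_nonneg h (sub_nonneg.2 hyy')
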